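/- arXiv:math/0501054 — 2 statements merged into one kernel-verified Lean document; each statement's English description precedes it below -/
import Mathlib

section
/- For m in M_{(b_i);(c_j)} and i, j, if a is the k-th largest element of B_i ∩ w_m^{-1}(C_j) (for 1 ≤ k ≤ m_{i,j}), then inv_a(w_m) = m_{≤i,≥j} − k. -/
open Equiv Finset

/-- `s` is one of the standard Coxeter generators (adjacent transpositions) of `S_d`. -/
def IsAdjTrans {d : ℕ} (s : Perm (Fin d)) : Prop :=
  ∃ (i : ℕ) (h : i + 1 < d), s = Equiv.swap ⟨i, Nat.lt_of_succ_lt h⟩ ⟨i + 1, h⟩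

/-- Coxeter length: minimal length of an expression of `w` as a product of
adjacent transpositions. -/
noncomputable def len {d : ℕ} (w : Perm (Fin d)) : ℕ :=
  sInf {n | ∃ l : List (Perm (Fin d)),
    l.length = n ∧ (∀ s ∈ l, IsAdjTrans s) ∧ l.prod = w}

/-- Bruhat order: `y ≤ w` iff some reduced word for `w` has a subword with product `y`. -/
def BruhatLE {d : ℕ} (y w : Perm (Fin d)) : Prop :=
  ∃ l : List (Perm (Fin d)), (∀ s ∈ l, IsAdjTrans s) ∧ l.length = len w ∧ l.prod = w ∧
    ∃ l' : List (Perm (Fin d)), List.Sublist l' l ∧ l'.prod = y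

/-- `inv_a(w) = |{a' < a : w(a') > w(a)}|`. -/
def invi {d : ℕ} (w : Perm (Fin d)) (a : Fin d) : ℕ :=
  (Finset.univ.filter (fun a' => a' < a ∧ w a < w a')).card

/-- `m` lies in `M_{(b_i);(c_j)}`: an `n × n'` matrix of nonnegative integers
with row sums `b i` and column sums `c j`. -/
def MemM {n n' : ℕ} (b : Fin n → ℕ) (c : Fin n' → ℕ) (m : Fin n → Fin n' → ℕ) : Prop :=
  (∀ i, ∑ j, m i j = b i) ∧ (∀ j, ∑ i, m i j = c j)

/-- The block `B_i ⊆ [1,d]`: the `i`-th consecutive interval, of size `b i`. -/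
def block (d : ℕ) {n : ℕ} (b : Fin n → ℕ) (i : Fin n) : Finset (Fin d) :=
  Finset.univ.filter (fun x : Fin d =>
    ∑ i' ∈ Finset.univ.filter (fun i' => i' < i), b i' ≤ (x : ℕ) ∧
    (x : ℕ) < ∑ i' ∈ Finset.univ.filter (fun i' => i' ≤ i), b i')

/-- `ψ(w)_{i,j} = |w(B_i) ∩ C_j|`. -/
def psi (d : ℕ) {n n' : ℕ} (b : Fin n → ℕ) (c : Fin n' → ℕ) (w : Perm (Fin d)) :
    Fin n → Fin n' → ℕ :=
  fun i j => ((block d b i).filter (fun x => w x ∈ block d c j)).card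

/-- `w` lies in the parabolic subgroup preserving each block `B_i` separately. -/
def PreservesBlocks (d : ℕ) {n : ℕ} (b : Fin n → ℕ) (w : Perm (Fin d)) : Prop :=
  ∀ i : Fin n, ∀ x ∈ block d b i, w x ∈ block d b i

/-- `m_{≤i,≥j} = Σ_{i'≤i, j'≥j} m_{i',j'}`. -/
def sUR {n n' : ℕ} (m : Fin n → Fin n' → ℕ) (i : Fin n) (j : Fin n') : ℕ :=
  ∑ i' ∈ Finset.univ.filter (fun i' => i' ≤ i),
    ∑ j' ∈ Finset.univ.filter (fun j' => j ≤ j'), m i' j'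

/-- `m_{≥i,≤j} = Σ_{i'≥i, j'≤j} m_{i',j'}`. -/
def sLL {n n' : ℕ} (m : Fin n → Fin n' → ℕ) (i : Fin n) (j : Fin n') : ℕ :=
  ∑ i' ∈ Finset.univ.filter (fun i' => i ≤ i'),
    ∑ j' ∈ Finset.univ.filter (fun j' => j' ≤ j), m i' j'

/-!
A longest element `w` of its `psi`-fibre is decreasing on every block `B_i`, and `w⁻¹` is
decreasing on every block `C_j`: otherwise multiplying by an adjacent transposition inside the
block keeps `psi` and adds one inversion, and the Coxeter length is the number of inversions.
Hence, for `a ∈ B_i ∩ w⁻¹ C_j` and `a' ∈ B_{i'} ∩ w⁻¹ C_{j'}`, the pair `a' < a`, `w a < w a'`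
is an inversion exactly when `i' ≤ i`, `j ≤ j'`, and `a'` is not one of the `k` elements of
`B_i ∩ w⁻¹ C_j` that are `≥ a`.
-/

section Inversions

variable {α : Type*} [LinearOrder α]

lemma swap_apply_lt_swap_apply_iff {p q x y : α} (hpq : p ⋖ q) (hxy : (x, y) ≠ (p, q))
    (hyx : (x, y) ≠ (q, p)) : swap p q x < swap p q y ↔ x < y := by
  have := hpq.lt
  have := hpq.le_of_lt (c := x)
  have := hpq.le_of_lt (c := y)
  have := hpq.ge_of_gt (c := x)
  have := hpq.ge_of_gt (c := y)
  simp only [ne_eq, Prod.mk.injEq] at hxy hyx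
  rw [swap_apply_def, swap_apply_def]
  split_ifs <;> grind

variable [Fintype α]

def inversions (w : Perm α) : Finset (α × α) :=
  univ.filter fun p => p.1 < p.2 ∧ w p.2 < w p.1

@[simp]
lemma mem_inversions {w : Perm α} {p : α × α} :
    p ∈ inversions w ↔ p.1 < p.2 ∧ w p.2 < w p.1 := by
  simp [inversions]

@[simp]
lemma inversions_one : inversions (1 : Perm α) = ∅ := by
  ext p
  simpa using fun h : p.1 < p.2 => h.not_gt

lemma card_inversions_mul_swap_erase (w : Perm α) {p q : α} (hpq : p ⋖ q) :
    #((inversions (w * swap p q)).erase (p, q)) = #((inversions w).erase (p, q)) := by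
  refine card_equiv ((swap p q).prodCongr (swap p q)) fun x => ?_
  rcases x with ⟨x, y⟩
  by_cases hyx : (x, y) = (q, p)
  · simp only [Prod.mk.injEq] at hyx
    obtain ⟨rfl, rfl⟩ := hyx
    simp [hpq.lt.not_gt]
  by_cases hxy : (x, y) = (p, q)
  · simp only [Prod.mk.injEq] at hxy
    obtain ⟨rfl, rfl⟩ := hxy
    simp [hpq.lt.not_gt]
  simp only [mem_erase, mem_inversions, Perm.mul_apply, prodCongr_apply, Prod.map,
    swap_apply_lt_swap_apply_iff hpq hxy hyx]
  simp_all [swap_apply_eq_iff]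

lemma card_inversions_mul_swap_of_lt (w : Perm α) {p q : α} (hpq : p ⋖ q) (hw : w p < w q) :
    #(inversions (w * swap p q)) = #(inversions w) + 1 := by
  have hmem : (p, q) ∈ inversions (w * swap p q) := by simpa using ⟨hpq.lt, hw⟩
  have hnot : (p, q) ∉ inversions w := by simp [hw.le]
  have := card_inversions_mul_swap_erase w hpq
  rw [card_erase_of_mem hmem, erase_eq_of_notMem hnot] at this
  have := card_pos.2 ⟨_, hmem⟩
  omega

lemma card_inversions_mul_swap_of_gt (w : Perm α) {p q : α} (hpq : p ⋖ q) (hw : w q < w p) :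
    #(inversions (w * swap p q)) + 1 = #(inversions w) := by
  simpa [mul_assoc] using
    (card_inversions_mul_swap_of_lt (w * swap p q) hpq (by simpa using hw)).symm

lemma card_inversions_mul_swap_le (w : Perm α) {p q : α} (hpq : p ⋖ q) :
    #(inversions (w * swap p q)) ≤ #(inversions w) + 1 := by
  rcases lt_or_gt_of_ne (w.injective.ne hpq.lt.ne) with h | h
  · exact (card_inversions_mul_swap_of_lt w hpq h).le
  · linarith [card_inversions_mul_swap_of_gt w hpq h]

lemma card_inversions_inv (w : Perm α) : #(inversions w⁻¹) = #(inversions w) :=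
  card_equiv ((w.symm.prodCongr w.symm).trans (Equiv.prodComm α α)) fun x => by
    simp [and_comm, Perm.inv_def]

lemma exists_covBy_apply_lt_of_ne_one [SuccOrder α] [IsSuccArchimedean α] {w : Perm α}
    (hw : w ≠ 1) : ∃ p q, p ⋖ q ∧ w q < w p := by
  by_contra! h
  have hmono : StrictMono w := strictMono_of_lt_succ fun a ha =>
    (h _ _ (Order.covBy_succ_of_not_isMax ha)).lt_of_ne
      (w.injective.ne (Order.lt_succ_of_not_isMax ha).ne)
  refine hw (Equiv.ext fun x => ?_)
  exact DFunLike.congr_fun (Subsingleton.elim (hmono.orderIsoOfSurjective w w.surjective)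
    (OrderIso.refl α)) x

end Inversions

section Length

variable {d : ℕ}

lemma isAdjTrans_iff {s : Perm (Fin d)} : IsAdjTrans s ↔ ∃ p q : Fin d, p ⋖ q ∧ s = swap p q := by
  constructor
  · rintro ⟨i, hi, rfl⟩
    exact ⟨_, _, Fin.covBy_iff.2 (Nat.covBy_iff_add_one_eq.2 rfl), rfl⟩
  · rintro ⟨p, q, hpq, rfl⟩
    obtain ⟨p, hp⟩ := p
    obtain ⟨q, hq⟩ := q
    obtain rfl : p + 1 = q := Nat.covBy_iff_add_one_eq.1 (Fin.covBy_iff.1 hpq)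
    exact ⟨p, hq, rfl⟩

lemma card_inversions_mul_prod_le (w : Perm (Fin d)) (l : List (Perm (Fin d)))
    (hl : ∀ s ∈ l, IsAdjTrans s) : #(inversions (w * l.prod)) ≤ #(inversions w) + l.length := by
  induction l generalizing w with
  | nil => simp
  | cons s l ih =>
    obtain ⟨p, q, hpq, rfl⟩ := isAdjTrans_iff.1 (hl s (List.mem_cons_self ..))
    have := ih (w * swap p q) fun t ht => hl t (List.mem_cons_of_mem _ ht)
    have := card_inversions_mul_swap_le w hpq
    simp only [List.prod_cons, List.length_cons, ← mul_assoc]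
    omega

lemma exists_adjTrans_word (w : Perm (Fin d)) :
    ∃ l : List (Perm (Fin d)), l.length = #(inversions w) ∧ (∀ s ∈ l, IsAdjTrans s) ∧
      l.prod = w := by
  induction h : #(inversions w) generalizing w with
  | zero =>
    refine ⟨[], rfl, by simp, ?_⟩
    by_contra hw
    obtain ⟨p, q, hpq, hlt⟩ := exists_covBy_apply_lt_of_ne_one (Ne.symm hw)
    exact (card_pos.2 ⟨(p, q), by simpa using ⟨hpq.lt, hlt⟩⟩).ne' h
  | succ k ih =>
    have hw : w ≠ 1 := by rintro rfl; simp at h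
    obtain ⟨p, q, hpq, hlt⟩ := exists_covBy_apply_lt_of_ne_one hw
    obtain ⟨l, hlen, hl, hprod⟩ :=
      ih (w * swap p q) (by have := card_inversions_mul_swap_of_gt w hpq hlt; omega)
    refine ⟨l ++ [swap p q], by simpa using hlen, fun s hs => ?_, by simp [hprod]⟩
    rcases List.mem_append.1 hs with hs | hs
    · exact hl s hs
    · exact isAdjTrans_iff.2 ⟨p, q, hpq, List.mem_singleton.1 hs⟩

lemma len_eq_card_inversions (w : Perm (Fin d)) : len w = #(inversions w) := by
  obtain ⟨l, hlen, hl, hprod⟩ := exists_adjTrans_word w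
  refine le_antisymm (hlen ▸ Nat.sInf_le ⟨l, rfl, hl, hprod⟩) (le_csInf ⟨_, l, rfl, hl, hprod⟩ ?_)
  rintro _ ⟨l', rfl, hl', rfl⟩
  simpa using card_inversions_mul_prod_le 1 l' hl'

lemma len_inv (w : Perm (Fin d)) : len w⁻¹ = len w := by
  rw [len_eq_card_inversions, len_eq_card_inversions, card_inversions_inv]

lemma len_mul_swap_of_lt (w : Perm (Fin d)) {p q : Fin d} (hpq : p ⋖ q) (hw : w p < w q) :
    len (w * swap p q) = len w + 1 := by
  rw [len_eq_card_inversions, len_eq_card_inversions, card_inversions_mul_swap_of_lt w hpq hw]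

end Length

section Blocks

variable {d n : ℕ} {b : Fin n → ℕ}

def blockStart (b : Fin n → ℕ) (t : ℕ) : ℕ :=
  ∑ i : Fin n with i.val < t, b i

lemma blockStart_mono (b : Fin n → ℕ) : Monotone (blockStart b) := fun _ _ hst =>
  sum_le_sum_of_subset fun i => by simp only [mem_filter, mem_univ, true_and]; omega

lemma blockStart_of_le (b : Fin n → ℕ) {t : ℕ} (ht : n ≤ t) : blockStart b t = ∑ i, b i := by
  rw [blockStart, filter_true_of_mem fun i _ => i.2.trans_le ht]

lemma mem_block_iff {i : Fin n} {x : Fin d} :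
    x ∈ block d b i ↔ blockStart b i ≤ x ∧ (x : ℕ) < blockStart b (i + 1) := by
  simp only [block, blockStart, mem_filter, mem_univ, true_and, Fin.lt_def, Fin.le_def,
    Nat.lt_succ_iff]

lemma lt_of_mem_block_of_lt {i i' : Fin n} {x y : Fin d} (hii' : i < i')
    (hx : x ∈ block d b i) (hy : y ∈ block d b i') : x < y := by
  rw [mem_block_iff] at hx hy
  have := blockStart_mono b (show (i : ℕ) + 1 ≤ i' from hii')
  rw [Fin.lt_def]
  omega

lemma eq_of_mem_block {i i' : Fin n} {x : Fin d} (hx : x ∈ block d b i)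
    (hx' : x ∈ block d b i') : i = i' := by
  by_contra hne
  rcases lt_or_gt_of_ne hne with h | h
  · exact (lt_of_mem_block_of_lt h hx hx').false
  · exact (lt_of_mem_block_of_lt h hx' hx).false

lemma exists_mem_block (hb : ∑ i, b i = d) (x : Fin d) : ∃ i, x ∈ block d b i := by
  have hn : (x : ℕ) < blockStart b n := by rw [blockStart_of_le b le_rfl, hb]; exact x.2
  have hex : ∃ t, (x : ℕ) < blockStart b t := ⟨n, hn⟩
  have hpos : 0 < Nat.find hex := Nat.pos_of_ne_zero fun h0 => by
    have := Nat.find_spec hex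
    rw [h0] at this
    simp [blockStart] at this
  have hle : Nat.find hex ≤ n := Nat.find_min' hex hn
  refine ⟨⟨Nat.find hex - 1, by omega⟩, mem_block_iff.2 ⟨?_, ?_⟩⟩
  · exact not_lt.1 (Nat.find_min hex (Nat.sub_lt hpos one_pos))
  · simpa [Nat.sub_add_cancel hpos] using Nat.find_spec hex

lemma ordConnected_block (i : Fin n) : (block d b i : Set (Fin d)).OrdConnected :=
  ⟨fun x hx y hy z hz => by
    simp only [mem_coe, mem_block_iff] at hx hy ⊢
    have := Fin.le_def.1 hz.1
    have := Fin.le_def.1 hz.2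
    omega⟩

lemma swap_mem_block_iff {i i' : Fin n} {x y z : Fin d} (hx : x ∈ block d b i)
    (hy : y ∈ block d b i) : swap x y z ∈ block d b i' ↔ z ∈ block d b i' := by
  rw [swap_apply_def]
  split_ifs with hzx hzy
  · subst hzx
    exact ⟨fun h => eq_of_mem_block hy h ▸ hx, fun h => eq_of_mem_block hx h ▸ hy⟩
  · subst hzy
    exact ⟨fun h => eq_of_mem_block hx h ▸ hy, fun h => eq_of_mem_block hy h ▸ hx⟩
  · rfl

end Blocks

section Fibers

variable {d n n' : ℕ} {b : Fin n → ℕ} {c : Fin n' → ℕ}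

lemma psi_mul_swap (w : Perm (Fin d)) {i : Fin n} {x y : Fin d}
    (hx : x ∈ block d b i) (hy : y ∈ block d b i) : psi d b c (w * swap x y) = psi d b c w := by
  funext i' j'
  refine card_equiv (swap x y) fun z => ?_
  rw [mem_filter, mem_filter, swap_mem_block_iff hx hy, Perm.mul_apply]

lemma psi_inv (b : Fin n → ℕ) (c : Fin n' → ℕ) (w : Perm (Fin d)) :
    psi d c b w⁻¹ = fun j i => psi d b c w i j := by
  funext j i
  refine card_equiv w.symm fun x => ?_
  simp [Perm.inv_def, and_comm]

lemma sum_sum_psi_eq_card_biUnion (w : Perm (Fin d)) (I : Finset (Fin n)) (J : Finset (Fin n')) :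
    ∑ i ∈ I, ∑ j ∈ J, psi d b c w i j =
      #(I.biUnion fun i => J.biUnion fun j => (block d b i).filter (w · ∈ block d c j)) := by
  rw [card_biUnion]
  · refine sum_congr rfl fun i _ => ?_
    rw [card_biUnion]
    · rfl
    · intro j _ j' _ hne
      refine disjoint_left.2 fun x hx hx' => hne ?_
      exact eq_of_mem_block (mem_filter.1 hx).2 (mem_filter.1 hx').2
  · intro i _ i' _ hne
    refine disjoint_left.2 fun x hx hx' => hne ?_
    simp only [mem_biUnion, mem_filter] at hx hx'
    obtain ⟨_, _, hx, _⟩ := hx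
    obtain ⟨_, _, hx', _⟩ := hx'
    exact eq_of_mem_block hx hx'

/-- The fibres of `psi` are the double cosets of the Young subgroups, so a longest element of a
fibre is the paper's `w_m`. -/
def IsLongestInFiber (b : Fin n → ℕ) (c : Fin n' → ℕ) (w : Perm (Fin d)) : Prop :=
  ∀ y, psi d b c y = psi d b c w → len y ≤ len w

variable {w : Perm (Fin d)}

lemma IsLongestInFiber.inv (h : IsLongestInFiber b c w) : IsLongestInFiber c b w⁻¹ := by
  intro y hy
  rw [← len_inv y, len_inv w]
  refine h _ ?_
  rw [psi_inv c b y, hy, psi_inv]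

lemma IsLongestInFiber.strictAntiOn_block (h : IsLongestInFiber b c w) (i : Fin n) :
    StrictAntiOn w (block d b i) :=
  strictAntiOn_of_succ_lt (ordConnected_block i) fun x hx hxB hsB => by
    have hcov := Order.covBy_succ_of_not_isMax hx
    refine (w.injective.ne hcov.lt.ne').lt_of_le ?_
    by_contra! hlt
    have := h _ (psi_mul_swap w hxB hsB)
    rw [len_mul_swap_of_lt w hcov hlt] at this
    omega

end Fibers

section Counting

variable {d n n' : ℕ} {b : Fin n → ℕ} {c : Fin n' → ℕ} {w : Perm (Fin d)}

lemma lt_and_apply_lt_iff (hrow : ∀ i, StrictAntiOn w (block d b i))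
    (hcol : ∀ j, StrictAntiOn ⇑w⁻¹ (block d c j)) {i i' : Fin n} {j j' : Fin n'} {a x : Fin d}
    (ha : a ∈ block d b i) (hwa : w a ∈ block d c j)
    (hx : x ∈ block d b i') (hwx : w x ∈ block d c j') :
    x < a ∧ w a < w x ↔ i' ≤ i ∧ j ≤ j' ∧ ¬(i' = i ∧ j' = j ∧ a ≤ x) := by
  have hi_lt : i' < i → x < a := fun h => lt_of_mem_block_of_lt h hx ha
  have hi_gt : i < i' → a < x := fun h => lt_of_mem_block_of_lt h ha hx
  have hj_lt : j' < j → w x < w a := fun h => lt_of_mem_block_of_lt h hwx hwa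
  have hj_gt : j < j' → w a < w x := fun h => lt_of_mem_block_of_lt h hwa hwx
  have hi_eq : i' = i → (w a < w x ↔ x < a) := by
    rintro rfl
    exact (hrow i').lt_iff_gt ha hx
  have hj_eq : j' = j → (x < a ↔ w a < w x) := by
    rintro rfl
    simpa using (hcol j').lt_iff_gt hwx hwa
  grind

lemma invi_add_card_eq_sUR (hb : ∑ i, b i = d) (hc : ∑ j, c j = d)
    (hrow : ∀ i, StrictAntiOn w (block d b i)) (hcol : ∀ j, StrictAntiOn ⇑w⁻¹ (block d c j))
    {i : Fin n} {j : Fin n'} {a : Fin d}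
    (ha : a ∈ (block d b i).filter (fun x => w x ∈ block d c j)) :
    invi w a + #(((block d b i).filter (fun x => w x ∈ block d c j)).filter (fun x => a ≤ x)) =
      sUR (psi d b c w) i j := by
  set T := ((block d b i).filter (fun x => w x ∈ block d c j)).filter (fun x => a ≤ x)
  set U := (univ.filter (· ≤ i)).biUnion fun i' => (univ.filter (j ≤ ·)).biUnion fun j' =>
    (block d b i').filter (w · ∈ block d c j')
  obtain ⟨ha, hwa⟩ := mem_filter.1 ha
  have hTU : T ⊆ U := fun x hx => by
    simp only [T, U, mem_filter, mem_biUnion, mem_univ, true_and] at hx ⊢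
    exact ⟨i, le_rfl, j, le_rfl, hx.1⟩
  have hS : univ.filter (fun x => x < a ∧ w a < w x) = U \ T := by
    ext x
    obtain ⟨i', hx⟩ := exists_mem_block hb x
    obtain ⟨j', hwx⟩ := exists_mem_block hc (w x)
    have hU : x ∈ U ↔ i' ≤ i ∧ j ≤ j' := by
      simp only [U, mem_filter, mem_biUnion, mem_univ, true_and]
      refine ⟨fun ⟨i'', hi'', j'', hj'', hx'', hwx''⟩ => ?_, fun h => ⟨i', h.1, j', h.2, hx, hwx⟩⟩
      rw [eq_of_mem_block hx hx'', eq_of_mem_block hwx hwx'']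
      exact ⟨hi'', hj''⟩
    have hT : x ∈ T ↔ i' = i ∧ j' = j ∧ a ≤ x := by
      simp only [T, mem_filter]
      exact ⟨fun h => ⟨eq_of_mem_block hx h.1.1, eq_of_mem_block hwx h.1.2, h.2⟩,
        by rintro ⟨rfl, rfl, h⟩; exact ⟨⟨hx, hwx⟩, h⟩⟩
    rw [mem_filter, mem_sdiff, hU, hT, lt_and_apply_lt_iff hrow hcol ha hwa hx hwx]
    simp [and_assoc]
  rw [invi, hS, card_sdiff_add_card_eq_card hTU, sUR, sum_sum_psi_eq_card_biUnion]

end Counting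

theorem stmt11_general (d n n' : ℕ) (b : Fin n → ℕ) (c : Fin n' → ℕ)
    (hb : ∑ i, b i = d) (hc : ∑ j, c j = d)
    (m : Fin n → Fin n' → ℕ)
    (w : Perm (Fin d)) (hw : psi d b c w = m)
    (hmax : ∀ y : Perm (Fin d), psi d b c y = m → len y ≤ len w)
    (i : Fin n) (j : Fin n') (k : ℕ)
    (a : Fin d) (ha : a ∈ (block d b i).filter (fun x => w x ∈ block d c j))
    (hkth : (((block d b i).filter (fun x => w x ∈ block d c j)).filter
        (fun x => a ≤ x)).card = k) :
    invi w a + k = sUR m i j := by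
  have hlong : IsLongestInFiber b c w := fun y hy => hmax y (hy.trans hw)
  rw [← hkth, ← hw]
  exact invi_add_card_eq_sUR hb hc hlong.strictAntiOn_block hlong.inv.strictAntiOn_block ha

/-- if `a` is the `k`-th largest element of `B_i ∩ w_m⁻¹(C_j)`
(for `1 ≤ k ≤ m_{i,j}`), then `inv_a(w_m) = m_{≤i,≥j} − k` (stated additively). -/
theorem stmt11 (d n n' : ℕ) (b : Fin n → ℕ) (c : Fin n' → ℕ)
    (hb : ∑ i, b i = d) (hc : ∑ j, c j = d)
    (m : Fin n → Fin n' → ℕ) (hm : MemM b c m)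
    (w : Perm (Fin d)) (hw : psi d b c w = m)
    (hmax : ∀ y : Perm (Fin d), psi d b c y = m → len y ≤ len w)
    (i : Fin n) (j : Fin n') (k : ℕ) (hk1 : 1 ≤ k) (hk2 : k ≤ m i j)
    (a : Fin d) (ha : a ∈ (block d b i).filter (fun x => w x ∈ block d c j))
    (hkth : (((block d b i).filter (fun x => w x ∈ block d c j)).filter
        (fun x => a ≤ x)).card = k) :
    invi w a + k = sUR m i j :=
  stmt11_general d n n' b c hb hc m w hw hmax i j k a ha hkth
end

section
/- Let M'_{(d_i)} = {m ∈ M_{(d_i);(d_j)} : m_{i,j} = 0 for all j < i−1}. Then M'_{(d_i)} is a lower ideal of the poset M_{(d_i);(d_j)}: if m' ∈ M'_{(d_i)} and m ≤ m' (in the order induced by Bruhat order on longest double coset representatives, equivalently m_{≥i,≤j} ≤ m'_{≥i,≤j} for all i,j), then m ∈ M'_{(d_i)}. -/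
open Equiv Finset

/-- `M'_{(d_i)}` is a lower ideal of `M_{(d_i);(d_j)}`: if `m ≤ m'`
(i.e. `m_{≥i,≤j} ≤ m'_{≥i,≤j}` for all `i,j`) and `m'_{i,j} = 0` for all `j < i−1`,
then also `m_{i,j} = 0` for all `j < i−1`. -/
theorem stmt13 (n : ℕ) (dv : Fin n → ℕ) (m m' : Fin n → Fin n → ℕ)
    (hm : MemM dv dv m) (hm' : MemM dv dv m')
    (htri' : ∀ i j : Fin n, (j : ℕ) + 1 < (i : ℕ) → m' i j = 0)
    (hord : ∀ i j : Fin n, sLL m i j ≤ sLL m' i j) :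
    ∀ i j : Fin n, (j : ℕ) + 1 < (i : ℕ) → m i j = 0 := by
  intro i j hij
  have h0 : sLL m' i j = 0 := by
    unfold sLL
    apply Finset.sum_eq_zero
    intro i' hi'
    apply Finset.sum_eq_zero
    intro j' hj'
    simp only [Finset.mem_filter, Finset.mem_univ, true_and, Fin.le_def] at hi' hj'
    exact htri' i' j' (by omega)
  have h1 := hord i j
  rw [h0, Nat.le_zero] at h1
  have h2 : m i j ≤ sLL m i j := by
    unfold sLL
    calc m i j ≤ ∑ j' ∈ Finset.univ.filter (fun j' => j' ≤ j), m i j' :=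
          Finset.single_le_sum (fun _ _ => Nat.zero_le _) (by simp)
      _ ≤ _ :=
          Finset.single_le_sum (f := fun i' => ∑ j' ∈ Finset.univ.filter (fun j' => j' ≤ j), m i' j')
            (fun _ _ => Nat.zero_le _) (by simp)
  omega
end
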